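/- arXiv:1708.05317 — 6 statements merged into one kernel-verified Lean document; each statement's English description precedes it below -/
import Mathlib

section
/- Let A and B be k-algebras and τ : B ⊗ A → A ⊗ B a linear map. Define a multiplication on A ⊗ B by m = (m_A ⊗ m_B) ∘ (id_A ⊗ τ ⊗ id_B). Then A ⊗^τ B is an associative algebra with unit 1_A ⊗ 1_B if and only if τ is normal (τ(b ⊗ 1_A) = 1_A ⊗ b and τ(1_B ⊗ a) = a ⊗ 1_B for all a ∈ A, b ∈ B) and quasitriangular, i.e. (id_A ⊗ m_B)(τ ⊗ id_B)(id_B ⊗ τ) = τ(m_B ⊗ id_A) and (m_A ⊗ id_B)(id_A ⊗ τ)(τ ⊗ id_A) = τ(id_B ⊗ m_A). -/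
/-!
Statement 0: For a linear map `τ : B ⊗ A → A ⊗ B`, the product
`(m_A ⊗ m_B) ∘ (id_A ⊗ τ ⊗ id_B)` on `A ⊗ B` is associative with unit `1 ⊗ 1`
iff `τ` is normal and quasitriangular.
-/

open TensorProduct

set_option synthInstance.maxHeartbeats 1000000
set_option maxHeartbeats 1000000

noncomputable section

variable {k : Type*} [Field k]
variable {A B : Type*} [Ring A] [Algebra k A] [Ring B] [Algebra k B]

/-- The multiplication `(m_A ⊗ m_B) ∘ (id_A ⊗ τ ⊗ id_B)` on `A ⊗ B`
(as a linear map on `(A ⊗ B) ⊗ (A ⊗ B)`). -/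
def twMulMap (τ : B ⊗[k] A →ₗ[k] A ⊗[k] B) :
    (A ⊗[k] B) ⊗[k] (A ⊗[k] B) →ₗ[k] A ⊗[k] B :=
  TensorProduct.map (LinearMap.mul' k A) (LinearMap.mul' k B)
    ∘ₗ (TensorProduct.assoc k (A ⊗[k] A) B B).toLinearMap
    ∘ₗ TensorProduct.map (TensorProduct.assoc k A A B).symm.toLinearMap
        (LinearMap.id : B →ₗ[k] B)
    ∘ₗ TensorProduct.map (TensorProduct.map (LinearMap.id : A →ₗ[k] A) τ)
        (LinearMap.id : B →ₗ[k] B)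
    ∘ₗ TensorProduct.map (TensorProduct.assoc k A B A).toLinearMap
        (LinearMap.id : B →ₗ[k] B)
    ∘ₗ (TensorProduct.assoc k (A ⊗[k] B) A B).symm.toLinearMap

/-- `τ` is normal: `τ(b ⊗ 1) = 1 ⊗ b` and `τ(1 ⊗ a) = a ⊗ 1`. -/
def IsNormal (τ : B ⊗[k] A →ₗ[k] A ⊗[k] B) : Prop :=
  (∀ b : B, τ (b ⊗ₜ (1 : A)) = (1 : A) ⊗ₜ b) ∧
    ∀ a : A, τ ((1 : B) ⊗ₜ a) = a ⊗ₜ (1 : B)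

/-- `τ` is quasitriangular:
`(id_A ⊗ m_B)(τ ⊗ id_B)(id_B ⊗ τ) = τ(m_B ⊗ id_A)` and
`(m_A ⊗ id_B)(id_A ⊗ τ)(τ ⊗ id_A) = τ(id_B ⊗ m_A)`. -/
def IsQuasitriangular (τ : B ⊗[k] A →ₗ[k] A ⊗[k] B) : Prop :=
  (TensorProduct.map (LinearMap.id : A →ₗ[k] A) (LinearMap.mul' k B)
      ∘ₗ (TensorProduct.assoc k A B B).toLinearMap
      ∘ₗ TensorProduct.map τ (LinearMap.id : B →ₗ[k] B)
      ∘ₗ (TensorProduct.assoc k B A B).symm.toLinearMap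
      ∘ₗ TensorProduct.map (LinearMap.id : B →ₗ[k] B) τ
      ∘ₗ (TensorProduct.assoc k B B A).toLinearMap
    = τ ∘ₗ TensorProduct.map (LinearMap.mul' k B) (LinearMap.id : A →ₗ[k] A)) ∧
  (TensorProduct.map (LinearMap.mul' k A) (LinearMap.id : B →ₗ[k] B)
      ∘ₗ (TensorProduct.assoc k A A B).symm.toLinearMap
      ∘ₗ TensorProduct.map (LinearMap.id : A →ₗ[k] A) τ
      ∘ₗ (TensorProduct.assoc k A B A).toLinearMap
      ∘ₗ TensorProduct.map τ (LinearMap.id : A →ₗ[k] A)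
      ∘ₗ (TensorProduct.assoc k B A A).symm.toLinearMap
    = τ ∘ₗ TensorProduct.map (LinearMap.id : B →ₗ[k] B) (LinearMap.mul' k A))

section Aux

variable (τ : B ⊗[k] A →ₗ[k] A ⊗[k] B)

lemma aux_mul (a : A) (b' : B) (u : A ⊗[k] B) :
    TensorProduct.map (LinearMap.mul' k A) (LinearMap.mul' k B)
      ((TensorProduct.assoc k (A ⊗[k] A) B B)
        ((TensorProduct.map (TensorProduct.assoc k A A B).symm.toLinearMap
            (LinearMap.id : B →ₗ[k] B)) ((a ⊗ₜ u) ⊗ₜ b'))) =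
    TensorProduct.map (LinearMap.mulLeft k a) (LinearMap.mulRight k b') u := by
  induction u using TensorProduct.induction_on with
  | zero => simp
  | tmul x y => simp
  | add u v hu hv => simp only [tmul_add, add_tmul, map_add, hu, hv]

lemma twMul_tmul (a a' : A) (b b' : B) :
    twMulMap τ ((a ⊗ₜ b) ⊗ₜ (a' ⊗ₜ b')) =
    TensorProduct.map (LinearMap.mulLeft k a) (LinearMap.mulRight k b') (τ (b ⊗ₜ a')) := by
  simp only [twMulMap, LinearMap.coe_comp, Function.comp_apply, LinearEquiv.coe_coe,
    assoc_symm_tmul, map_tmul, assoc_tmul, LinearMap.id_coe, id_eq]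
  exact aux_mul a b' (τ (b ⊗ₜ a'))
/-- `(id ⊗ m_B)(τ ⊗ id) : B ⊗ (A ⊗ B) → A ⊗ B` (suitably associated). -/
def L1 : B ⊗[k] (A ⊗[k] B) →ₗ[k] A ⊗[k] B :=
  TensorProduct.map (LinearMap.id : A →ₗ[k] A) (LinearMap.mul' k B)
    ∘ₗ (TensorProduct.assoc k A B B).toLinearMap
    ∘ₗ TensorProduct.map τ (LinearMap.id : B →ₗ[k] B)
    ∘ₗ (TensorProduct.assoc k B A B).symm.toLinearMap

/-- `(m_A ⊗ id)(id ⊗ τ) : (A ⊗ B) ⊗ A → A ⊗ B` (suitably associated). -/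
def L2 : (A ⊗[k] B) ⊗[k] A →ₗ[k] A ⊗[k] B :=
  TensorProduct.map (LinearMap.mul' k A) (LinearMap.id : B →ₗ[k] B)
    ∘ₗ (TensorProduct.assoc k A A B).symm.toLinearMap
    ∘ₗ TensorProduct.map (LinearMap.id : A →ₗ[k] A) τ
    ∘ₗ (TensorProduct.assoc k A B A).toLinearMap

lemma aux1 (y : B) (u : A ⊗[k] B) :
    TensorProduct.map (LinearMap.id : A →ₗ[k] A) (LinearMap.mul' k B)
      ((TensorProduct.assoc k A B B) (u ⊗ₜ y)) =
    TensorProduct.map (LinearMap.id : A →ₗ[k] A) (LinearMap.mulRight k y) u := by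
  induction u using TensorProduct.induction_on with
  | zero => simp
  | tmul x b => simp
  | add u v hu hv => simp only [add_tmul, map_add, hu, hv]

lemma aux2 (x : A) (u : A ⊗[k] B) :
    TensorProduct.map (LinearMap.mul' k A) (LinearMap.id : B →ₗ[k] B)
      ((TensorProduct.assoc k A A B).symm (x ⊗ₜ u)) =
    TensorProduct.map (LinearMap.mulLeft k x) (LinearMap.id : B →ₗ[k] B) u := by
  induction u using TensorProduct.induction_on with
  | zero => simp
  | tmul a b => simp
  | add u v hu hv => simp only [tmul_add, map_add, hu, hv]

lemma L1_tmul (b : B) (x : A) (y : B) :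
    L1 τ (b ⊗ₜ (x ⊗ₜ y)) =
      TensorProduct.map (LinearMap.id : A →ₗ[k] A) (LinearMap.mulRight k y) (τ (b ⊗ₜ x)) := by
  simp only [L1, LinearMap.coe_comp, Function.comp_apply, LinearEquiv.coe_coe, assoc_symm_tmul,
    map_tmul, LinearMap.id_coe, id_eq]
  exact aux1 y (τ (b ⊗ₜ x))

lemma L2_tmul (x : A) (y : B) (a' : A) :
    L2 τ ((x ⊗ₜ y) ⊗ₜ a') =
      TensorProduct.map (LinearMap.mulLeft k x) (LinearMap.id : B →ₗ[k] B) (τ (y ⊗ₜ a')) := by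
  simp only [L2, LinearMap.coe_comp, Function.comp_apply, LinearEquiv.coe_coe, assoc_tmul,
    map_tmul, LinearMap.id_coe, id_eq]
  exact aux2 x (τ (y ⊗ₜ a'))
end Aux

lemma qt_iff (τ : B ⊗[k] A →ₗ[k] A ⊗[k] B) :
    IsQuasitriangular τ ↔
      ((∀ (b b' : B) (a : A), L1 τ (b ⊗ₜ τ (b' ⊗ₜ a)) = τ ((b * b') ⊗ₜ a)) ∧
       (∀ (b : B) (a a' : A), L2 τ (τ (b ⊗ₜ a) ⊗ₜ a') = τ (b ⊗ₜ (a * a')))) := by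
  constructor
  · rintro ⟨h1, h2⟩
    constructor
    · intro b b' a
      have := LinearMap.congr_fun h1 ((b ⊗ₜ b') ⊗ₜ a)
      simpa [L1, LinearMap.mul'_apply] using this
    · intro b a a'
      have := LinearMap.congr_fun h2 (b ⊗ₜ (a ⊗ₜ a'))
      simpa [L2, LinearMap.mul'_apply] using this
  · rintro ⟨h1, h2⟩
    constructor
    · apply TensorProduct.ext_threefold
      intro b b' a
      simpa [L1, LinearMap.mul'_apply] using h1 b b' a
    · apply TensorProduct.ext'
      intro b w
      induction w using TensorProduct.induction_on with
      | zero => simp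
      | tmul a a' => simpa [L2, LinearMap.mul'_apply] using h2 b a a'
      | add u v hu hv => simp only [tmul_add, map_add, hu, hv]

section DE
variable (τ : B ⊗[k] A →ₗ[k] A ⊗[k] B)

def Dmap (v : A ⊗[k] B) : A ⊗[k] B →ₗ[k] A ⊗[k] B :=
  TensorProduct.map (LinearMap.mul' k A) (LinearMap.id : B →ₗ[k] B)
    ∘ₗ (TensorProduct.assoc k A A B).symm.toLinearMap
    ∘ₗ TensorProduct.map (LinearMap.id : A →ₗ[k] A)
        (L1 τ ∘ₗ (TensorProduct.mk k B (A ⊗[k] B)).flip v)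

def Emap (u : A ⊗[k] B) : A ⊗[k] B →ₗ[k] A ⊗[k] B :=
  TensorProduct.map (LinearMap.id : A →ₗ[k] A) (LinearMap.mul' k B)
    ∘ₗ (TensorProduct.assoc k A B B).toLinearMap
    ∘ₗ TensorProduct.map (L2 τ ∘ₗ TensorProduct.mk k (A ⊗[k] B) A u)
        (LinearMap.id : B →ₗ[k] B)

lemma D_tmul (v : A ⊗[k] B) (x : A) (y : B) :
    Dmap τ v (x ⊗ₜ y) =
      TensorProduct.map (LinearMap.mulLeft k x) (LinearMap.id : B →ₗ[k] B)
        (L1 τ (y ⊗ₜ v)) := by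
  simp only [Dmap, LinearMap.coe_comp, Function.comp_apply, LinearEquiv.coe_coe, map_tmul,
    LinearMap.id_coe, id_eq, TensorProduct.mk_apply, LinearMap.flip_apply]
  exact aux2 x (L1 τ (y ⊗ₜ v))

lemma E_tmul (u : A ⊗[k] B) (u' : A) (v' : B) :
    Emap τ u (u' ⊗ₜ v') =
      TensorProduct.map (LinearMap.id : A →ₗ[k] A) (LinearMap.mulRight k v')
        (L2 τ (u ⊗ₜ u')) := by
  simp only [Emap, LinearMap.coe_comp, Function.comp_apply, LinearEquiv.coe_coe, map_tmul,
    LinearMap.id_coe, id_eq, TensorProduct.mk_apply]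
  exact aux1 v' (L2 τ (u ⊗ₜ u'))

lemma Emap_zero : Emap τ 0 = 0 := by
  apply TensorProduct.ext'
  intro u' v'
  simp [E_tmul, zero_tmul]

lemma Emap_add (u u' : A ⊗[k] B) : Emap τ (u + u') = Emap τ u + Emap τ u' := by
  apply TensorProduct.ext'
  intro p q
  simp [E_tmul, add_tmul]

lemma DE (u v : A ⊗[k] B) : Dmap τ v u = Emap τ u v := by
  induction u using TensorProduct.induction_on with
  | zero => simp [Emap_zero]
  | add u u' hu hv => simp [Emap_add, hu, hv]
  | tmul x y =>
    rw [D_tmul]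
    induction v using TensorProduct.induction_on with
    | zero => simp
    | add v v' h h' => simp only [tmul_add, map_add, h, h']
    | tmul p q =>
      rw [E_tmul, L1_tmul, L2_tmul]
      generalize τ (y ⊗ₜ p) = w
      induction w using TensorProduct.induction_on with
      | zero => simp
      | tmul s t => simp
      | add w w' h h' => simp only [map_add, h, h']
end DE

section Steps
variable (τ : B ⊗[k] A →ₗ[k] A ⊗[k] B)

lemma stepL (h1 : ∀ (y b' : B) (a : A), L1 τ (y ⊗ₜ τ (b' ⊗ₜ a)) = τ ((y * b') ⊗ₜ a))
    (a a'' : A) (b' b'' : B) (u : A ⊗[k] B) :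
    twMulMap τ ((TensorProduct.map (LinearMap.mulLeft k a) (LinearMap.mulRight k b') u)
        ⊗ₜ (a'' ⊗ₜ b'')) =
    TensorProduct.map (LinearMap.mulLeft k a) (LinearMap.mulRight k b'')
      (Dmap τ (τ (b' ⊗ₜ a'')) u) := by
  induction u using TensorProduct.induction_on with
  | zero => simp [zero_tmul]
  | add u u' hu hv => simp only [map_add, add_tmul, hu, hv]
  | tmul x y =>
    rw [map_tmul, LinearMap.mulLeft_apply, LinearMap.mulRight_apply, twMul_tmul, ← h1,
      D_tmul]
    generalize L1 τ (y ⊗ₜ τ (b' ⊗ₜ a'')) = w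
    induction w using TensorProduct.induction_on with
    | zero => simp
    | tmul s t => simp [mul_assoc]
    | add w w' h h' => simp only [map_add, h, h']

lemma stepR (h2 : ∀ (b : B) (a u' : A), L2 τ (τ (b ⊗ₜ a) ⊗ₜ u') = τ (b ⊗ₜ (a * u')))
    (a a' : A) (b b'' : B) (v : A ⊗[k] B) :
    twMulMap τ ((a ⊗ₜ b)
        ⊗ₜ (TensorProduct.map (LinearMap.mulLeft k a') (LinearMap.mulRight k b'') v)) =
    TensorProduct.map (LinearMap.mulLeft k a) (LinearMap.mulRight k b'')
      (Emap τ (τ (b ⊗ₜ a')) v) := by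
  induction v using TensorProduct.induction_on with
  | zero => simp [tmul_zero, Emap_zero]
  | add v v' hu hv => simp only [map_add, tmul_add, Emap_add, LinearMap.add_apply, hu, hv]
  | tmul u' v' =>
    rw [map_tmul, LinearMap.mulLeft_apply, LinearMap.mulRight_apply, twMul_tmul, ← h2,
      E_tmul]
    generalize L2 τ (τ (b ⊗ₜ a') ⊗ₜ u') = w
    induction w using TensorProduct.induction_on with
    | zero => simp
    | tmul s t => simp [mul_assoc]
    | add w w' h h' => simp only [map_add, h, h']

end Steps

section Main
variable (τ : B ⊗[k] A →ₗ[k] A ⊗[k] B)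

lemma twMul_one_left (y : B) (u : A ⊗[k] B) :
    twMulMap τ ((((1 : A) ⊗ₜ y) : A ⊗[k] B) ⊗ₜ u) = L1 τ (y ⊗ₜ u) := by
  induction u using TensorProduct.induction_on with
  | zero => simp [tmul_zero]
  | tmul x' y' => rw [twMul_tmul, L1_tmul]; simp
  | add u v hu hv => simp only [tmul_add, map_add, hu, hv]

lemma twMul_one_right (a' : A) (u : A ⊗[k] B) :
    twMulMap τ (u ⊗ₜ ((a' ⊗ₜ (1 : B)) : A ⊗[k] B)) = L2 τ (u ⊗ₜ a') := by
  induction u using TensorProduct.induction_on with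
  | zero => simp [zero_tmul]
  | tmul x y => rw [twMul_tmul, L2_tmul]; simp
  | add u v hu hv => simp only [add_tmul, map_add, hu, hv]

theorem twistedTensorProduct_associative_unital_iff_normal_quasitriangular' :
    ((∀ x y z : A ⊗[k] B,
        twMulMap τ (twMulMap τ (x ⊗ₜ y) ⊗ₜ z) = twMulMap τ (x ⊗ₜ twMulMap τ (y ⊗ₜ z))) ∧
      (∀ x : A ⊗[k] B,
        twMulMap τ ((((1 : A) ⊗ₜ (1 : B)) : A ⊗[k] B) ⊗ₜ x) = x ∧
        twMulMap τ (x ⊗ₜ (((1 : A) ⊗ₜ (1 : B)) : A ⊗[k] B)) = x))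
    ↔ (IsNormal τ ∧ IsQuasitriangular τ) := by
  rw [qt_iff]
  constructor
  · rintro ⟨hassoc, hunit⟩
    have hn1 : ∀ b : B, τ (b ⊗ₜ (1 : A)) = (1 : A) ⊗ₜ b := by
      intro b
      have h := (hunit ((1 : A) ⊗ₜ b)).2
      rw [twMul_tmul] at h
      simpa using h
    have hn2 : ∀ a : A, τ ((1 : B) ⊗ₜ a) = a ⊗ₜ (1 : B) := by
      intro a
      have h := (hunit (a ⊗ₜ (1 : B))).1
      rw [twMul_tmul] at h
      simpa using h
    refine ⟨⟨hn1, hn2⟩, ?_, ?_⟩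
    · intro y b' a
      have h := hassoc ((1 : A) ⊗ₜ y) ((1 : A) ⊗ₜ b') (a ⊗ₜ (1 : B))
      have e1 : twMulMap τ ((((1 : A) ⊗ₜ y) : A ⊗[k] B) ⊗ₜ (((1 : A) ⊗ₜ b') : A ⊗[k] B))
          = (1 : A) ⊗ₜ (y * b') := by
        rw [twMul_tmul, hn1]; simp
      have e2 : twMulMap τ ((((1 : A) ⊗ₜ b') : A ⊗[k] B) ⊗ₜ ((a ⊗ₜ (1 : B)) : A ⊗[k] B))
          = τ (b' ⊗ₜ a) := by
        rw [twMul_tmul]; simp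
      have e3 : twMulMap τ ((((1 : A) ⊗ₜ (y * b')) : A ⊗[k] B) ⊗ₜ ((a ⊗ₜ (1 : B)) : A ⊗[k] B))
          = τ ((y * b') ⊗ₜ a) := by
        rw [twMul_tmul]; simp
      rw [e1, e2, e3, twMul_one_left] at h
      exact h.symm
    · intro b a a'
      have h := hassoc ((1 : A) ⊗ₜ b) ((a ⊗ₜ (1 : B)) : A ⊗[k] B) ((a' ⊗ₜ (1 : B)) : A ⊗[k] B)
      have e1 : twMulMap τ ((((1 : A) ⊗ₜ b) : A ⊗[k] B) ⊗ₜ ((a ⊗ₜ (1 : B)) : A ⊗[k] B))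
          = τ (b ⊗ₜ a) := by
        rw [twMul_tmul]; simp
      have e2 : twMulMap τ (((a ⊗ₜ (1 : B)) : A ⊗[k] B) ⊗ₜ ((a' ⊗ₜ (1 : B)) : A ⊗[k] B))
          = (a * a') ⊗ₜ (1 : B) := by
        rw [twMul_tmul, hn2]; simp
      have e3 : twMulMap τ ((((1 : A) ⊗ₜ b) : A ⊗[k] B) ⊗ₜ (((a * a') ⊗ₜ (1 : B)) : A ⊗[k] B))
          = τ (b ⊗ₜ (a * a')) := by
        rw [twMul_tmul]; simp
      rw [e1, e2, e3, twMul_one_right] at h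
      exact h
  · rintro ⟨⟨hn1, hn2⟩, h1, h2⟩
    constructor
    · intro x y z
      induction x using TensorProduct.induction_on with
      | zero => simp [zero_tmul]
      | add x x' hx hx' => simp only [add_tmul, map_add, hx, hx']
      | tmul a b =>
        induction y using TensorProduct.induction_on with
        | zero => simp [zero_tmul, tmul_zero]
        | add y y' hy hy' => simp only [add_tmul, tmul_add, map_add, hy, hy']
        | tmul a' b' =>
          induction z using TensorProduct.induction_on with
          | zero => simp [tmul_zero]
          | add z z' hz hz' => simp only [tmul_add, map_add, hz, hz']
          | tmul a'' b'' =>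
            rw [twMul_tmul τ a a' b b', twMul_tmul τ a' a'' b' b'',
              stepL τ h1 a a'' b' b'', stepR τ h2 a a' b b'', DE]
    · intro x
      induction x using TensorProduct.induction_on with
      | zero => simp [tmul_zero, zero_tmul]
      | tmul a b =>
        constructor
        · rw [twMul_tmul, hn2]; simp
        · rw [twMul_tmul, hn1]; simp
      | add u v hu hv =>
        exact ⟨by simp only [tmul_add, map_add, hu.1, hv.1],
               by simp only [add_tmul, map_add, hu.2, hv.2]⟩

end Main

/-- `A ⊗^τ B` is an associative algebra with unit `1_A ⊗ 1_B`
iff `τ` is normal and quasitriangular. -/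
theorem twistedTensorProduct_associative_unital_iff_normal_quasitriangular
    (τ : B ⊗[k] A →ₗ[k] A ⊗[k] B) :
    ((∀ x y z : A ⊗[k] B,
        twMulMap τ (twMulMap τ (x ⊗ₜ y) ⊗ₜ z) = twMulMap τ (x ⊗ₜ twMulMap τ (y ⊗ₜ z))) ∧
      (∀ x : A ⊗[k] B,
        twMulMap τ ((((1 : A) ⊗ₜ (1 : B)) : A ⊗[k] B) ⊗ₜ x) = x ∧
        twMulMap τ (x ⊗ₜ (((1 : A) ⊗ₜ (1 : B)) : A ⊗[k] B)) = x))
    ↔ (IsNormal τ ∧ IsQuasitriangular τ) :=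
  twistedTensorProduct_associative_unital_iff_normal_quasitriangular' τ

end
end

section
/- Let τ : B ⊗ A → A ⊗ B be a twisting map, and suppose τ admits a linear inverse τ^{-1} : A ⊗ B → B ⊗ A which is itself normal and quasitriangular (a twisting map from A to B). Then the twisted tensor products A ⊗^τ B and B ⊗^{τ^{-1}} A are isomorphic as k-algebras, via the map a ⊗ b ↦ τ^{-1}(a ⊗ b). -/
open TensorProduct

noncomputable section

variable {k : Type*} [Field k]
variable {A B : Type*} [Ring A] [Algebra k A] [Ring B] [Algebra k B]

section AuxTwist

variable (τ : B ⊗[k] A →ₗ[k] A ⊗[k] B)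

lemma tw_tail1 (y : B) (w : A ⊗[k] B) :
    TensorProduct.map (LinearMap.id : A →ₗ[k] A) (LinearMap.mul' k B)
      ((TensorProduct.assoc k A B B) (w ⊗ₜ y))
    = TensorProduct.map LinearMap.id (LinearMap.mulRight k y) w := by
  induction w using TensorProduct.induction_on with
  | zero => simp only [zero_tmul, LinearEquiv.map_zero, LinearMap.map_zero]
  | tmul p q => simp
  | add u v hu hv =>
    simp only [add_tmul, LinearEquiv.map_add, LinearMap.map_add, hu, hv]

lemma tw_tail2 (p : A) (d : A ⊗[k] B) :
    TensorProduct.map (LinearMap.mul' k A) (LinearMap.id : B →ₗ[k] B)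
      ((TensorProduct.assoc k A A B).symm (p ⊗ₜ d))
    = TensorProduct.map (LinearMap.mulLeft k p) LinearMap.id d := by
  induction d using TensorProduct.induction_on with
  | zero => simp only [tmul_zero, LinearEquiv.map_zero, LinearMap.map_zero]
  | tmul s t => simp
  | add u v hu hv =>
    simp only [tmul_add, LinearEquiv.map_add, LinearMap.map_add, hu, hv]

lemma tw_tail3 (p : A) (y : B) (c : A ⊗[k] B) :
    TensorProduct.map (LinearMap.mul' k A) (LinearMap.mul' k B)
      ((TensorProduct.assoc k (A ⊗[k] A) B B)
        (TensorProduct.map (TensorProduct.assoc k A A B).symm.toLinearMap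
          (LinearMap.id : B →ₗ[k] B) ((p ⊗ₜ c) ⊗ₜ y)))
    = TensorProduct.map (LinearMap.mulLeft k p) (LinearMap.mulRight k y) c := by
  induction c using TensorProduct.induction_on with
  | zero => simp only [tmul_zero, zero_tmul, LinearEquiv.map_zero, LinearMap.map_zero]
  | tmul s t => simp
  | add u v hu hv =>
    simp only [tmul_add, add_tmul, LinearEquiv.map_add, LinearMap.map_add, hu, hv]

lemma twMulMap_tmul (p x : A) (q y : B) :
    twMulMap τ ((p ⊗ₜ q) ⊗ₜ (x ⊗ₜ y))
    = TensorProduct.map (LinearMap.mulLeft k p) (LinearMap.mulRight k y)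
        (τ (q ⊗ₜ x)) := by
  rw [← tw_tail3 p y (τ (q ⊗ₜ x))]
  simp only [twMulMap, LinearMap.coe_comp, Function.comp_apply, LinearEquiv.coe_coe,
    assoc_symm_tmul, map_tmul, assoc_tmul, LinearMap.id_coe, id_eq]

/-- Left tail of the first quasitriangularity condition, as a linear map. -/
def Fmap (b : B) : A ⊗[k] B →ₗ[k] A ⊗[k] B :=
  TensorProduct.map (LinearMap.id : A →ₗ[k] A) (LinearMap.mul' k B)
    ∘ₗ (TensorProduct.assoc k A B B).toLinearMap
    ∘ₗ TensorProduct.map τ (LinearMap.id : B →ₗ[k] B)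
    ∘ₗ (TensorProduct.assoc k B A B).symm.toLinearMap
    ∘ₗ TensorProduct.mk k B (A ⊗[k] B) b

/-- Left tail of the second quasitriangularity condition, as a linear map. -/
def Gmap (a' : A) : A ⊗[k] B →ₗ[k] A ⊗[k] B :=
  TensorProduct.map (LinearMap.mul' k A) (LinearMap.id : B →ₗ[k] B)
    ∘ₗ (TensorProduct.assoc k A A B).symm.toLinearMap
    ∘ₗ TensorProduct.map (LinearMap.id : A →ₗ[k] A) τ
    ∘ₗ (TensorProduct.assoc k A B A).toLinearMap
    ∘ₗ (TensorProduct.mk k (A ⊗[k] B) A).flip a'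

lemma Fmap_tmul (b : B) (x : A) (y : B) :
    Fmap τ b (x ⊗ₜ y)
    = TensorProduct.map LinearMap.id (LinearMap.mulRight k y) (τ (b ⊗ₜ x)) := by
  rw [← tw_tail1 y (τ (b ⊗ₜ x))]
  simp only [Fmap, LinearMap.coe_comp, Function.comp_apply, LinearEquiv.coe_coe,
    mk_apply, assoc_symm_tmul, map_tmul, LinearMap.id_coe, id_eq]

lemma Gmap_tmul (a' : A) (p : A) (c : B) :
    Gmap τ a' (p ⊗ₜ c)
    = TensorProduct.map (LinearMap.mulLeft k p) LinearMap.id (τ (c ⊗ₜ a')) := by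
  rw [← tw_tail2 p (τ (c ⊗ₜ a'))]
  simp only [Gmap, LinearMap.coe_comp, Function.comp_apply, LinearMap.flip_apply,
    mk_apply, LinearEquiv.coe_coe, assoc_tmul, map_tmul, LinearMap.id_coe, id_eq]

lemma Fmap_tau (hQ : IsQuasitriangular τ) (b : B) (ζ : B ⊗[k] A) :
    Fmap τ b (τ ζ)
    = τ (TensorProduct.map (LinearMap.mulLeft k b) LinearMap.id ζ) := by
  induction ζ using TensorProduct.induction_on with
  | zero => simp
  | tmul β α =>
    have h := LinearMap.congr_fun hQ.1 ((b ⊗ₜ β) ⊗ₜ α)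
    simp only [LinearMap.coe_comp, Function.comp_apply, LinearEquiv.coe_coe,
      assoc_tmul, map_tmul, LinearMap.id_coe, id_eq, LinearMap.mul'_apply] at h
    simp only [Fmap, LinearMap.coe_comp, Function.comp_apply, LinearEquiv.coe_coe,
      mk_apply, map_tmul, LinearMap.id_coe, id_eq, LinearMap.mulLeft_apply]
    exact h
  | add u v hu hv => simp only [map_add, hu, hv]

lemma Gmap_tau (hQ : IsQuasitriangular τ) (a' : A) (ζ : B ⊗[k] A) :
    Gmap τ a' (τ ζ)
    = τ (TensorProduct.map LinearMap.id (LinearMap.mulRight k a') ζ) := by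
  induction ζ using TensorProduct.induction_on with
  | zero => simp
  | tmul β α =>
    have h := LinearMap.congr_fun hQ.2 (β ⊗ₜ (α ⊗ₜ a'))
    simp only [LinearMap.coe_comp, Function.comp_apply, LinearEquiv.coe_coe,
      assoc_symm_tmul, map_tmul, LinearMap.id_coe, id_eq, LinearMap.mul'_apply] at h
    simp only [Gmap, LinearMap.coe_comp, Function.comp_apply, LinearMap.flip_apply,
      mk_apply, LinearEquiv.coe_coe, map_tmul, LinearMap.id_coe, id_eq,
      LinearMap.mulRight_apply]
    exact h
  | add u v hu hv => simp only [map_add, hu, hv]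

lemma tw_map_split_left (f : A →ₗ[k] A) (g : B →ₗ[k] B) (w : A ⊗[k] B) :
    TensorProduct.map f g w
    = TensorProduct.map f LinearMap.id (TensorProduct.map LinearMap.id g w) := by
  rw [← LinearMap.comp_apply, ← TensorProduct.map_comp]
  simp

lemma tw_map_split_right (f : A →ₗ[k] A) (g : B →ₗ[k] B) (w : A ⊗[k] B) :
    TensorProduct.map f g w
    = TensorProduct.map LinearMap.id g (TensorProduct.map f LinearMap.id w) := by
  rw [← LinearMap.comp_apply, ← TensorProduct.map_comp]
  simp

lemma twMulMap_F (p : A) (q : B) (z : A ⊗[k] B) :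
    twMulMap τ ((p ⊗ₜ q) ⊗ₜ z)
    = TensorProduct.map (LinearMap.mulLeft k p) LinearMap.id (Fmap τ q z) := by
  induction z using TensorProduct.induction_on with
  | zero => simp
  | tmul x y =>
    rw [twMulMap_tmul, Fmap_tmul, ← tw_map_split_left]
  | add u v hu hv => simp only [tmul_add, map_add, hu, hv]

lemma tw_key (τ' : A ⊗[k] B →ₗ[k] B ⊗[k] A)
    (hinv₂ : τ ∘ₗ τ' = LinearMap.id) (hQ : IsQuasitriangular τ)
    (u v : B ⊗[k] A) :
    twMulMap τ (τ u ⊗ₜ τ v) = τ (twMulMap τ' (u ⊗ₜ v)) := by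
  induction u using TensorProduct.induction_on with
  | zero => simp
  | add u₁ u₂ h₁ h₂ => simp only [map_add, add_tmul, h₁, h₂]
  | tmul b a =>
    induction v using TensorProduct.induction_on with
    | zero => simp
    | add v₁ v₂ h₁ h₂ => simp only [map_add, tmul_add, h₁, h₂]
    | tmul b' a' =>
      have hrhs : τ (twMulMap τ' ((b ⊗ₜ a) ⊗ₜ (b' ⊗ₜ a')))
          = Gmap τ a' (TensorProduct.map LinearMap.id (LinearMap.mulRight k b')
              (τ (b ⊗ₜ a))) := by
        have hab : τ (τ' (a ⊗ₜ b')) = a ⊗ₜ b' := by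
          simpa using LinearMap.congr_fun hinv₂ (a ⊗ₜ b')
        rw [twMulMap_tmul τ' b b' a a', tw_map_split_right, ← Gmap_tau τ hQ,
          ← Fmap_tau τ hQ, hab, Fmap_tmul]
      rw [hrhs]
      have hw : ∀ w : A ⊗[k] B,
          twMulMap τ (w ⊗ₜ τ (b' ⊗ₜ a'))
          = Gmap τ a' (TensorProduct.map LinearMap.id (LinearMap.mulRight k b') w) := by
        intro w
        induction w using TensorProduct.induction_on with
        | zero => simp
        | add w₁ w₂ h₁ h₂ => simp only [map_add, add_tmul, h₁, h₂]
        | tmul p q =>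
          rw [twMulMap_F, Fmap_tau τ hQ]
          simp only [map_tmul, LinearMap.mulLeft_apply, LinearMap.id_coe, id_eq,
            LinearMap.mulRight_apply, Gmap_tmul]
      exact hw (τ (b ⊗ₜ a))

end AuxTwist

/-- If a twisting map `τ : B ⊗ A → A ⊗ B` has a linear inverse
`τ' = τ⁻¹ : A ⊗ B → B ⊗ A` which is itself a twisting map, then `τ'` is an algebra
isomorphism `A ⊗^τ B ≅ B ⊗^{τ⁻¹} A`. -/
theorem twistedTensor_inverse_iso (τ : B ⊗[k] A →ₗ[k] A ⊗[k] B)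
    (τ' : A ⊗[k] B →ₗ[k] B ⊗[k] A)
    (hinv₁ : τ' ∘ₗ τ = LinearMap.id) (hinv₂ : τ ∘ₗ τ' = LinearMap.id)
    (hN : IsNormal τ) (hQ : IsQuasitriangular τ)
    (hN' : IsNormal τ') (hQ' : IsQuasitriangular τ') :
    Function.Bijective τ' ∧
    τ' (((1 : A) ⊗ₜ (1 : B)) : A ⊗[k] B) = (1 : B) ⊗ₜ (1 : A) ∧
    ∀ x y : A ⊗[k] B,
      τ' (twMulMap τ (x ⊗ₜ y)) = twMulMap τ' (τ' x ⊗ₜ τ' y) := by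
  have h₁ : ∀ z, τ' (τ z) = z := fun z => LinearMap.congr_fun hinv₁ z
  have h₂ : ∀ z, τ (τ' z) = z := fun z => LinearMap.congr_fun hinv₂ z
  refine ⟨⟨Function.LeftInverse.injective h₂, fun x => ⟨τ x, h₁ x⟩⟩, hN'.1 1, ?_⟩
  intro x y
  have hkey := tw_key τ τ' hinv₂ hQ (τ' x) (τ' y)
  rw [h₂ x, h₂ y] at hkey
  rw [hkey, h₁]


end
end

section
/- Let C be a k-algebra and let f_A : A → C and f_B : B → C be algebra homomorphisms such that the multiplication map m_C ∘ (f_A ⊗ f_B) : A ⊗ B → C is a linear isomorphism. Then there exists a twisting map τ : B ⊗ A → A ⊗ B, given by τ = (m_C ∘ (f_A ⊗ f_B))^{-1} ∘ m_C ∘ (f_B ⊗ f_A), such that C ≅ A ⊗^τ B as algebras. -/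
open TensorProduct

noncomputable section

variable {k : Type*} [Field k]
variable {A B : Type*} [Ring A] [Algebra k A] [Ring B] [Algebra k B]

variable {C : Type*} [Ring C] [Algebra k C]

/-- The linear map `m_C ∘ (f ⊗ g) : A ⊗ B → C`. -/
def mulComp (f : A →ₐ[k] C) (g : B →ₐ[k] C) : A ⊗[k] B →ₗ[k] C :=
  LinearMap.mul' k C ∘ₗ TensorProduct.map f.toLinearMap g.toLinearMap


set_option synthInstance.maxHeartbeats 1000000
set_option maxHeartbeats 1000000

section Aux

variable {C : Type*} [Ring C] [Algebra k C]

lemma mulComp_tmul' (f : A →ₐ[k] C) (g : B →ₐ[k] C) (a : A) (b : B) :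
    mulComp f g (a ⊗ₜ b) = f a * g b := by
  simp [mulComp]

lemma phi_map' (fA : A →ₐ[k] C) (fB : B →ₐ[k] C) (a : A) (b : B) (t : A ⊗[k] B) :
    mulComp fA fB (TensorProduct.map (LinearMap.mulLeft k a) (LinearMap.mulRight k b) t)
      = fA a * mulComp fA fB t * fB b := by
  induction t using TensorProduct.induction_on with
  | zero => simp
  | tmul a' b' => simp [mulComp_tmul', map_mul, mul_assoc]
  | add x y hx hy => simp [map_add, hx, hy, mul_add, add_mul]

lemma stepA' (τ : B ⊗[k] A →ₗ[k] A ⊗[k] B) (a : A) (b : B) (a' : A) (b' : B) :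
    twMulMap τ ((a ⊗ₜ b) ⊗ₜ (a' ⊗ₜ b'))
      = TensorProduct.map (LinearMap.mulLeft k a) (LinearMap.mulRight k b') (τ (b ⊗ₜ a')) := by
  have h : ∀ t : A ⊗[k] B,
      TensorProduct.map (LinearMap.mul' k A) (LinearMap.mul' k B)
        ((TensorProduct.assoc k (A ⊗[k] A) B B)
          (TensorProduct.map (TensorProduct.assoc k A A B).symm.toLinearMap LinearMap.id
            ((a ⊗ₜ t) ⊗ₜ b')))
      = TensorProduct.map (LinearMap.mulLeft k a) (LinearMap.mulRight k b') t := by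
    intro t
    induction t using TensorProduct.induction_on with
    | zero => simp
    | tmul a1 b1 => simp
    | add x y hx hy => simp only [tmul_add, add_tmul, map_add] at *; rw [hx, hy]
  simpa [twMulMap] using h (τ (b ⊗ₜ a'))

lemma innerR' (fA : A →ₐ[k] C) (fB : B →ₐ[k] C) (b1 : B) (s : A ⊗[k] B) :
    mulComp fA fB (TensorProduct.map LinearMap.id (LinearMap.mul' k B)
        ((TensorProduct.assoc k A B B) (s ⊗ₜ b1)))
      = mulComp fA fB s * fB b1 := by
  induction s using TensorProduct.induction_on with
  | zero => simp
  | tmul a b => simp [mulComp_tmul', map_mul, mul_assoc]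
  | add x y hx hy => simp only [add_tmul, map_add, hx, hy, add_mul]

lemma innerL' (fA : A →ₐ[k] C) (fB : B →ₐ[k] C) (a1 : A) (t : A ⊗[k] B) :
    mulComp fA fB (TensorProduct.map (LinearMap.mul' k A) LinearMap.id
        ((TensorProduct.assoc k A A B).symm (a1 ⊗ₜ t)))
      = fA a1 * mulComp fA fB t := by
  induction t using TensorProduct.induction_on with
  | zero => simp
  | tmul a b => simp [mulComp_tmul', map_mul, mul_assoc]
  | add x y hx hy => simp only [tmul_add, map_add, hx, hy, mul_add]

end Aux

/-- **factorization.** If `f_A : A → C`, `f_B : B → C` are algebra maps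
such that `m_C ∘ (f_A ⊗ f_B)` is a linear isomorphism, then there is a twisting map
`τ = (m_C∘(f_A⊗f_B))⁻¹ ∘ m_C ∘ (f_B⊗f_A)` such that `m_C ∘ (f_A ⊗ f_B)` is an algebra
isomorphism `A ⊗^τ B ≅ C`. -/
theorem factorization_twistedTensorProduct (fA : A →ₐ[k] C) (fB : B →ₐ[k] C)
    (hbij : Function.Bijective (mulComp fA fB)) :
    ∃ τ : B ⊗[k] A →ₗ[k] A ⊗[k] B,
      IsNormal τ ∧ IsQuasitriangular τ ∧
      (∀ z : B ⊗[k] A, mulComp fA fB (τ z) = mulComp fB fA z) ∧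
      (∀ x y : A ⊗[k] B,
        mulComp fA fB (twMulMap τ (x ⊗ₜ y)) = mulComp fA fB x * mulComp fA fB y) ∧
      mulComp fA fB (((1 : A) ⊗ₜ (1 : B)) : A ⊗[k] B) = 1 := by
  classical
  set e := LinearEquiv.ofBijective (mulComp fA fB) hbij with he
  set τ : B ⊗[k] A →ₗ[k] A ⊗[k] B := e.symm.toLinearMap ∘ₗ mulComp fB fA with hτdef
  have hφ : ∀ x : A ⊗[k] B, e x = mulComp fA fB x := fun x => rfl
  have hτ : ∀ z : B ⊗[k] A, mulComp fA fB (τ z) = mulComp fB fA z := by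
    intro z
    show mulComp fA fB (e.symm (mulComp fB fA z)) = _
    rw [← hφ, e.apply_symm_apply]
  have hτt : ∀ (b : B) (a : A), mulComp fA fB (τ (b ⊗ₜ a)) = fB b * fA a := by
    intro b a; rw [hτ, mulComp_tmul']
  have hinj : Function.Injective (mulComp fA fB) := hbij.injective
  refine ⟨τ, ⟨?_, ?_⟩, ⟨?_, ?_⟩, hτ, ?_, ?_⟩
  · intro b
    apply hinj
    simp [hτt, mulComp_tmul']
  · intro a
    apply hinj
    simp [hτt, mulComp_tmul']
  · -- first quasitriangularity identity
    apply TensorProduct.ext_threefold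
    intro b b' a
    apply hinj
    simp only [LinearMap.comp_apply, LinearEquiv.coe_coe, TensorProduct.assoc_tmul,
      TensorProduct.map_tmul, LinearMap.id_coe, id_eq, LinearMap.mul'_apply]
    rw [hτt]
    have key : ∀ t : A ⊗[k] B,
        mulComp fA fB (TensorProduct.map LinearMap.id (LinearMap.mul' k B)
          ((TensorProduct.assoc k A B B)
            (TensorProduct.map τ LinearMap.id
              ((TensorProduct.assoc k B A B).symm (b ⊗ₜ t)))))
        = fB b * mulComp fA fB t := by
      intro t
      induction t using TensorProduct.induction_on with
      | zero => simp
      | tmul a1 b1 =>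
        simp only [TensorProduct.assoc_symm_tmul, TensorProduct.map_tmul,
          LinearMap.id_coe, id_eq]
        rw [innerR', hτt, mulComp_tmul', mul_assoc]
      | add x y hx hy =>
        simp only [tmul_add, map_add, hx, hy, mul_add]
    rw [key, hτt, map_mul, mul_assoc]
  · -- second quasitriangularity identity
    apply TensorProduct.ext'
    intro b x
    induction x using TensorProduct.induction_on with
    | zero => simp
    | add u v hu hv => simp only [tmul_add, map_add, hu, hv]
    | tmul a a' =>
    apply hinj
    simp only [LinearMap.comp_apply, LinearEquiv.coe_coe,
      TensorProduct.assoc_symm_tmul, TensorProduct.map_tmul,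
      LinearMap.id_coe, id_eq, LinearMap.mul'_apply]
    rw [hτt]
    have key : ∀ s : A ⊗[k] B,
        mulComp fA fB (TensorProduct.map (LinearMap.mul' k A) LinearMap.id
          ((TensorProduct.assoc k A A B).symm
            (TensorProduct.map LinearMap.id τ
              ((TensorProduct.assoc k A B A) (s ⊗ₜ a')))))
        = mulComp fA fB s * fA a' := by
      intro s
      induction s using TensorProduct.induction_on with
      | zero => simp
      | tmul a1 b1 =>
        simp only [TensorProduct.assoc_tmul, TensorProduct.map_tmul,
          LinearMap.id_coe, id_eq]
        rw [innerL', hτt, mulComp_tmul', mul_assoc]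
      | add x y hx hy =>
        simp only [add_tmul, map_add, hx, hy, add_mul]
    rw [key, hτt, map_mul, mul_assoc]
  · -- multiplicativity
    intro x y
    induction x using TensorProduct.induction_on with
    | zero => simp
    | tmul a b =>
      induction y using TensorProduct.induction_on with
      | zero => simp
      | tmul a' b' =>
        rw [stepA', phi_map', hτt, mulComp_tmul', mulComp_tmul']
        rw [mul_assoc, mul_assoc, mul_assoc]
      | add u v hu hv =>
        simp only [tmul_add, map_add, hu, hv, mul_add]
    | add u v hu hv =>
      simp only [add_tmul, map_add, hu, hv, add_mul]
  · rw [mulComp_tmul', map_one, map_one, mul_one]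


end
end

section
/- Let σ : A → M_m(A) be an invertible algebra homomorphism with inverse φ = σ^{-1}, and let P be a free left A-module of finite rank. Then the φ-twisted left A-module ^φ(P^{⊕m}) (with action a * x = φ(a) · x entrywise) is again a free left A-module. -/
/-!
Choose a basis of `P`, so that `P ≅ ι →₀ A` and `^φ(P^m) ≅ ^φ((ι →₀ A)^m)`. On `(ι →₀ A)^m`,
applying `φ` entrywise in `ι` and summing, `c ↦ (i ↦ Σ_j φ(c_j)_{ij})`, is an `A`-linear map from the
untwisted module to the twisted one because `φ` is multiplicative, and the two halves of
`IsMatInverse σ φ` say exactly that `x ↦ (j ↦ Σ_i σ(x_i)_{ij})` is a two-sided inverse of it.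
So `^φ(P^m)` is isomorphic to the free module `(ι →₀ A)^m`.
-/

noncomputable section

variable {k : Type*} [Field k]
variable {A : Type*} [Ring A] [Algebra k A]
variable {m : ℕ}

def IsMatInverse (σ φ : A →ₐ[k] Matrix (Fin m) (Fin m) A) : Prop :=
  (∀ (a : A) (i j : Fin m), (∑ t, φ (σ a i t) j t) = if i = j then a else 0) ∧
  (∀ (a : A) (i j : Fin m), (∑ t, σ (φ a t i) t j) = if i = j then a else 0)

open Matrix.Module

section Twist

variable {n ι : Type*} [Fintype n]

def twist (f : A →+ Matrix n n A) : (n → ι →₀ A) →+ (n → ι →₀ A) where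
  toFun c i := ∑ j, (c j).mapRange (fun a => f a i j) (by simp)
  map_zero' := by ext; simp
  map_add' c d := by ext; simp [Finset.sum_add_distrib]

@[simp]
theorem twist_apply (f : A →+ Matrix n n A) (c : n → ι →₀ A) (i : n) (t : ι) :
    twist f c i t = ∑ j, f (c j t) i j := by
  simp [twist, Finsupp.finsetSum_apply]

theorem twist_smul [DecidableEq n] (φ : A →+* Matrix n n A) (a : A) (c : n → ι →₀ A) :
    twist φ.toAddMonoidHom (a • c) = φ a • twist φ.toAddMonoidHom c := by
  ext i t
  simp only [twist_apply, Pi.smul_apply, Finsupp.coe_smul, smul_eq_mul,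
    RingHom.toAddMonoidHom_eq_coe, AddMonoidHom.coe_coe, map_mul, Matrix.mul_apply,
    Matrix.Module.smul_apply, Finsupp.finsetSum_apply, Finset.mul_sum]
  exact Finset.sum_comm

def twistTranspose (f : A →+ Matrix n n A) : (n → ι →₀ A) →+ (n → ι →₀ A) :=
  twist ((Matrix.transposeAddEquiv n n A).toAddMonoidHom.comp f)

@[simp]
theorem twistTranspose_apply (f : A →+ Matrix n n A) (x : n → ι →₀ A) (j : n) (t : ι) :
    twistTranspose f x j t = ∑ i, f (x i t) i j := by
  simp [twistTranspose]

end Twist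

section IsMatInverse

variable {σ φ : A →ₐ[k] Matrix (Fin m) (Fin m) A} {ι : Type*}

theorem IsMatInverse.twistTranspose_twist (hinv : IsMatInverse σ φ) (c : Fin m → ι →₀ A) :
    twistTranspose σ.toAddMonoidHom (twist φ.toAddMonoidHom c) = c := by
  ext j t
  simp only [twistTranspose_apply, twist_apply, AlgHom.toRingHom_eq_coe,
    RingHom.toAddMonoidHom_eq_coe, AlgHom.toRingHom_toAddMonoidHom, AddMonoidHom.coe_coe, map_sum,
    Matrix.sum_apply]
  rw [Finset.sum_comm]
  simp [hinv.2]

theorem IsMatInverse.twist_twistTranspose (hinv : IsMatInverse σ φ) (x : Fin m → ι →₀ A) :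
    twist φ.toAddMonoidHom (twistTranspose σ.toAddMonoidHom x) = x := by
  ext i t
  simp only [twistTranspose_apply, twist_apply, AlgHom.toRingHom_eq_coe,
    RingHom.toAddMonoidHom_eq_coe, AlgHom.toRingHom_toAddMonoidHom, AddMonoidHom.coe_coe, map_sum,
    Matrix.sum_apply]
  rw [Finset.sum_comm]
  simp [hinv.1]

end IsMatInverse

/-- The module `^φ(Pⁿ)`: the `Mₙ(A)`-module `Pⁿ` with scalars restricted along `φ`. -/
def Twisted {R n : Type*} [Ring R] [Fintype n] [DecidableEq n] (_φ : R →+* Matrix n n A)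
    (P : Type*) : Type _ :=
  n → P

namespace Twisted

variable {R n : Type*} [Ring R] [Fintype n] [DecidableEq n] (φ : R →+* Matrix n n A)
  (P : Type*) [AddCommGroup P] [Module A P]

instance : AddCommGroup (Twisted φ P) := inferInstanceAs (AddCommGroup (n → P))

instance : Module R (Twisted φ P) := Module.compHom (n → P) φ

variable {φ P}

def congr {Q : Type*} [AddCommGroup Q] [Module A Q] (e : P ≃ₗ[A] Q) :
    Twisted φ P ≃ₗ[R] Twisted φ Q where
  toFun x i := e (x i)
  invFun y i := e.symm (y i)
  map_add' x y := funext fun i => map_add e (x i) (y i)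
  map_smul' a x := funext fun i => by
    show e (∑ j, φ a i j • x j) = ∑ j, φ a i j • e (x j)
    simp
  left_inv x := funext fun i => e.symm_apply_apply (x i)
  right_inv y := funext fun i => e.apply_symm_apply (y i)

end Twisted

variable {σ φ : A →ₐ[k] Matrix (Fin m) (Fin m) A}

def IsMatInverse.finsuppEquiv (hinv : IsMatInverse σ φ) (ι : Type*) :
    (Fin m → ι →₀ A) ≃ₗ[A] Twisted φ.toRingHom (ι →₀ A) where
  toFun := twist φ.toAddMonoidHom
  invFun := twistTranspose σ.toAddMonoidHom
  map_add' := map_add _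
  map_smul' := twist_smul φ.toRingHom
  left_inv := hinv.twistTranspose_twist
  right_inv := hinv.twist_twistTranspose

theorem IsMatInverse.free_twisted (hinv : IsMatInverse σ φ) (P : Type*) [AddCommGroup P]
    [Module A P] [Module.Free A P] : Module.Free A (Twisted φ.toRingHom P) :=
  Module.Free.of_equiv <| (hinv.finsuppEquiv _).trans <|
    Twisted.congr (Module.Free.chooseBasis A P).repr.symm

theorem twisted_free_module_free_general (σ φ : A →ₐ[k] Matrix (Fin m) (Fin m) A)
    (hinv : IsMatInverse σ φ)
    (P : Type*) [AddCommGroup P] [Module A P] [Module.Free A P] :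
    ∃ inst : Module A (Fin m → P),
      (∀ (a : A) (x : Fin m → P),
        inst.toDistribMulAction.toMulAction.toSMul.smul a x
          = fun j => ∑ i, φ a j i • x i) ∧
      @Module.Free A (Fin m → P) _ _ inst :=
  ⟨inferInstanceAs (Module A (Twisted φ.toRingHom P)), fun _ _ => rfl, hinv.free_twisted P⟩

/-- If `σ` is invertible with inverse `φ` and `P` is a free left
`A`-module of finite rank, then the `φ`-twisted module `^φ(P^{⊕m})`, with action
`(a * x)_j = Σ_i φ_{ji}(a) • x_i`, is again a free left `A`-module. -/
theorem twisted_free_module_free (σ φ : A →ₐ[k] Matrix (Fin m) (Fin m) A)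
    (hinv : IsMatInverse σ φ)
    (P : Type*) [AddCommGroup P] [Module A P] [Module.Free A P] [Module.Finite A P] :
    ∃ inst : Module A (Fin m → P),
      (∀ (a : A) (x : Fin m → P),
        inst.toDistribMulAction.toMulAction.toSMul.smul a x
          = fun j => ∑ i, φ a j i • x i) ∧
      @Module.Free A (Fin m → P) _ _ inst :=
  twisted_free_module_free_general σ φ hinv P

end
end

section
/- Let σ : A → M_m(A) be an invertible graded algebra homomorphism with inverse φ, and M a graded left A-module. Then there is a natural isomorphism of graded left A-modules (A ⊗ U)^σ ⊗_A M ≅ ^φ(M ⊗ U) given by (Σ_i a_i ⊗ u_i) ⊗ x ↦ Σ_j (Σ_i φ_{ji}(a_i) x) ⊗ u_j, where U = k^{⊕m} with basis u_1,…,u_m. -/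
/-!
Statement 13: for `σ : A → M_m(A)` invertible with inverse `φ` and a left `A`-module
`M`, the map `ζ : (A ⊗ U)^σ ⊗_A M → ^φ(M ⊗ U)`,
`(Σᵢ aᵢ ⊗ uᵢ) ⊗ x ↦ Σⱼ (Σᵢ φ_{ji}(aᵢ) x) ⊗ uⱼ`, is a natural isomorphism of left
`A`-modules.  The balanced tensor product over the (possibly noncommutative) ring `A`
is encoded as the quotient of the `k`-tensor product by the balancing relations.
-/

open TensorProduct

noncomputable section

variable {k : Type*} [Field k]
variable {A : Type*} [Ring A] [Algebra k A]
variable {m : ℕ}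

variable {M : Type*} [AddCommGroup M] [Module k M] [Module A M]
  [IsScalarTower k A M] [SMulCommClass k A M]

/-- The bilinear map `ζ : (A ⊗ U)^σ × M → ^φ(M ⊗ U)`,
`ζ(a, x)_j = Σ_i φ_{ji}(a_i) • x`. -/
def zeta (φ : A →ₐ[k] Matrix (Fin m) (Fin m) A) :
    (Fin m → A) →ₗ[k] M →ₗ[k] (Fin m → M) :=
  LinearMap.mk₂ k (fun a x j => ∑ i, φ (a i) j i • x)
    (fun a a' x => by
      funext j
      simp [Pi.add_apply, map_add, Matrix.add_apply, add_smul, Finset.sum_add_distrib])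
    (fun c a x => by
      funext j
      simp [Pi.smul_apply, map_smul, Matrix.smul_apply, Finset.smul_sum, smul_assoc])
    (fun a x x' => by
      funext j
      simp [smul_add, Finset.sum_add_distrib])
    (fun c a x => by
      funext j
      rw [Pi.smul_apply, Finset.smul_sum]
      exact Finset.sum_congr rfl fun i _ => smul_comm _ _ _)

/-- The `σ`-twisted right action of `A` on `(A ⊗ U)^σ = A^{⊕m}`:
`(v * b)_j = Σ_i v_i σ_{ij}(b)`. -/
def sigmaRight (σ : A →ₐ[k] Matrix (Fin m) (Fin m) A) (v : Fin m → A) (b : A) :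
    Fin m → A :=
  fun j => ∑ i, v i * σ b i j

/-- The `φ`-twisted left action of `A` on `^φ(M ⊗ U) = M^{⊕m}`:
`(b * y)_j = Σ_i φ_{ji}(b) • y_i`. -/
def phiLeft (φ : A →ₐ[k] Matrix (Fin m) (Fin m) A) (b : A) (y : Fin m → M) :
    Fin m → M :=
  fun j => ∑ i, φ b j i • y i

/-- The submodule of balancing relations defining `(A ⊗ U)^σ ⊗_A M` as a quotient of
the `k`-tensor product `(A ⊗ U) ⊗_k M`. -/
def balRel (σ : A →ₐ[k] Matrix (Fin m) (Fin m) A) :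
    Submodule k ((Fin m → A) ⊗[k] M) :=
  Submodule.span k
    {z | ∃ (v : Fin m → A) (b : A) (x : M),
      z = sigmaRight σ v b ⊗ₜ x - v ⊗ₜ (b • x)}

/-- `ζ` is `A`-balanced, left `A`-equivariant, and induces a
(natural) isomorphism of left `A`-modules `(A ⊗ U)^σ ⊗_A M ≅ ^φ(M ⊗ U)`, the inverse
being induced by some `η` with `ζ ∘ η = id` and `η ∘ ζ = id` modulo the balancing
relations. -/
theorem zeta_isomorphism (σ φ : A →ₐ[k] Matrix (Fin m) (Fin m) A)
    (hinv : IsMatInverse σ φ) :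
    (∀ (v : Fin m → A) (b : A) (x : M),
      TensorProduct.lift (zeta φ) (sigmaRight σ v b ⊗ₜ x)
        = TensorProduct.lift (zeta φ) (v ⊗ₜ (b • x))) ∧
    (∀ (b : A) (v : Fin m → A) (x : M),
      TensorProduct.lift (zeta φ) ((fun i => b * v i) ⊗ₜ x)
        = phiLeft φ b (TensorProduct.lift (zeta φ) (v ⊗ₜ x))) ∧
    (∃ η : (Fin m → M) →ₗ[k] ((Fin m → A) ⊗[k] M),
      (∀ y : Fin m → M, TensorProduct.lift (zeta φ) (η y) = y) ∧
      (∀ z : (Fin m → A) ⊗[k] M,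
        η (TensorProduct.lift (zeta φ) z) - z ∈ balRel σ)) := by
  obtain ⟨h1, h2⟩ := hinv
  have hz : ∀ (v : Fin m → A) (x : M) (j : Fin m),
      TensorProduct.lift (zeta φ) (v ⊗ₜ x) j = ∑ i, φ (v i) j i • x := by
    intro v x j; rfl
  refine ⟨?_, ?_, ?_⟩
  · intro v b x
    funext j
    rw [hz, hz]
    have key : ∑ i, φ (sigmaRight σ v b i) j i = ∑ t, φ (v t) j t * b := by
      simp only [sigmaRight, map_sum, map_mul, Matrix.sum_apply, Matrix.mul_apply,
        Finset.sum_mul]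
      rw [Finset.sum_comm]
      refine Finset.sum_congr rfl fun t _ => ?_
      rw [Finset.sum_comm]
      simp only [← Finset.mul_sum, h1]
      simp
    rw [← Finset.sum_smul, key, Finset.sum_smul]
    exact Finset.sum_congr rfl fun t _ => mul_smul _ _ _
  · intro b v x
    funext j
    rw [hz]
    simp only [phiLeft, hz, map_mul, Matrix.mul_apply, Finset.sum_smul,
      Finset.smul_sum, smul_smul]
    exact Finset.sum_comm
  · refine ⟨∑ t : Fin m,
      (TensorProduct.mk k (Fin m → A) M (fun s => σ 1 t s)).comp (LinearMap.proj t),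
      ?_, ?_⟩
    · intro y
      funext j
      simp only [LinearMap.sum_apply, LinearMap.comp_apply, LinearMap.proj_apply,
        map_sum, TensorProduct.mk_apply, Finset.sum_apply, hz]
      have key : ∀ t : Fin m, ∑ i, φ (σ 1 t i) j i • y t
          = (if t = j then (1:A) else 0) • y t := by
        intro t; rw [← Finset.sum_smul, h1]
      rw [Finset.sum_congr rfl fun t _ => key t]
      simp
    · intro z
      induction z using TensorProduct.induction_on with
      | zero => simpa using (balRel σ (M := M)).zero_mem
      | add z1 z2 ih1 ih2 =>
        have := (balRel σ).add_mem ih1 ih2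
        simpa [map_add, add_sub_add_comm] using this
      | tmul v x =>
        have hgen : ∀ (w : Fin m → A) (b : A),
            sigmaRight σ w b ⊗ₜ[k] x - w ⊗ₜ (b • x) ∈ balRel σ :=
          fun w b => Submodule.subset_span ⟨w, b, x, rfl⟩
        have hmem : ∑ t : Fin m, ∑ i : Fin m,
            (sigmaRight σ (fun s => σ 1 t s) (φ (v i) t i) ⊗ₜ[k] x
              - (fun s => σ 1 t s) ⊗ₜ (φ (v i) t i • x)) ∈ balRel σ :=
          Submodule.sum_mem _ fun t _ => Submodule.sum_mem _ fun i _ => hgen _ _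
        have hs : ∑ t : Fin m, ∑ i : Fin m,
            sigmaRight σ (fun s => σ 1 t s) (φ (v i) t i) = v := by
          funext j
          simp only [Finset.sum_apply, sigmaRight, map_one, Matrix.one_apply,
            ite_mul, one_mul, zero_mul, Finset.sum_ite_eq, Finset.mem_univ, if_true]
          rw [Finset.sum_comm]
          simp only [h2]
          simp
        have heq : (∑ t : Fin m,
              (TensorProduct.mk k (Fin m → A) M (fun s => σ 1 t s)).comp
                (LinearMap.proj t)) (TensorProduct.lift (zeta φ) (v ⊗ₜ x))
            - v ⊗ₜ x
            = -(∑ t : Fin m, ∑ i : Fin m,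
              (sigmaRight σ (fun s => σ 1 t s) (φ (v i) t i) ⊗ₜ[k] x
                - (fun s => σ 1 t s) ⊗ₜ (φ (v i) t i • x))) := by
          have e1 : ∑ t : Fin m, ∑ i : Fin m,
              (sigmaRight σ (fun s => σ 1 t s) (φ (v i) t i) ⊗ₜ[k] x
                - (fun s => σ 1 t s) ⊗ₜ (φ (v i) t i • x))
              = v ⊗ₜ x
                - ∑ t : Fin m, ∑ i : Fin m,
                    (fun s => σ 1 t s) ⊗ₜ (φ (v i) t i • x) := by
            simp only [Finset.sum_sub_distrib]
            congr 1
            conv_rhs => rw [← hs]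
            simp only [TensorProduct.sum_tmul]
          rw [e1, neg_sub]
          congr 1
          simp only [LinearMap.sum_apply, LinearMap.comp_apply, LinearMap.proj_apply,
            TensorProduct.mk_apply, hz]
          exact Finset.sum_congr rfl fun t _ => by
            rw [TensorProduct.tmul_sum]
        rw [heq]
        exact (balRel σ).neg_mem hmem

end
end

section
/- (Ore extension as twisted tensor product) Let A be a k-algebra, σ an algebra automorphism of A, and δ a σ-derivation (δ(ab) = σ(a)δ(b) + δ(a)b). Define τ : k[z] ⊗ A → A ⊗ k[z] on generators by τ(z ⊗ a) = σ(a) ⊗ z + δ(a) ⊗ 1 and extend via the quasitriangularity conditions. Then τ is a twisting map and A ⊗^τ k[z] is isomorphic as an algebra to the Ore extension A[z; σ, δ]. -/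
/-!
Let `Z (a ⊗ q) = σ a ⊗ X q + δ a ⊗ q` be left multiplication by `z` on `A[z; σ, δ]`, read as
`A ⊗ k[X]`, and put `τ (p ⊗ a) = p(Z) (a ⊗ 1)`, the product `p(z) · a` in the Ore extension.
Quasitriangularity reduces to two commutation facts. `Z` commutes with right multiplication by
`1 ⊗ r`, which gives `τ (p q ⊗ a) = p(Z) (τ (q ⊗ a))`. By the twisted Leibniz rule, `Z` also
commutes with `c ⊗ r ↦ (c ⊗ 1) τ (r ⊗ b)`, right multiplication by `b`, which gives
`τ (p ⊗ a b) = τ (p ⊗ a) · b`.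
-/

open TensorProduct

noncomputable section

variable {k : Type*} [Field k]
variable {A B : Type*} [Ring A] [Algebra k A] [Ring B] [Algebra k B]

open Polynomial

theorem Polynomial.commute_aeval_left {R S : Type*} [CommSemiring R] [Semiring S] [Algebra R S]
    {x y : S} (h : Commute x y) (p : R[X]) : Commute (aeval x p) y :=
  (Algebra.commute_of_mem_adjoin_singleton_of_commute (p.aeval_mem_adjoin_singleton R x)
    h.symm).symm

section TwistingMap

variable (τ : B ⊗[k] A →ₗ[k] A ⊗[k] B)

theorem map_id_mul'_assoc_tmul (t : A ⊗[k] B) (q : B) :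
    TensorProduct.map LinearMap.id (LinearMap.mul' k B) (TensorProduct.assoc k A B B (t ⊗ₜ q))
      = t * (1 ⊗ₜ q) := by
  induction t with
  | zero => simp
  | tmul a p => simp
  | add x y hx hy => simp only [add_tmul, map_add, hx, hy, add_mul]

theorem map_mul'_id_assoc_symm_tmul (c : A) (u : A ⊗[k] B) :
    TensorProduct.map (LinearMap.mul' k A) LinearMap.id
        ((TensorProduct.assoc k A A B).symm (c ⊗ₜ u))
      = (c ⊗ₜ 1) * u := by
  induction u with
  | zero => simp
  | tmul a p => simp
  | add x y hx hy => simp only [tmul_add, map_add, hx, hy, mul_add]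

theorem twMulMap_tmul_s14 (a a' : A) (p q : B) :
    twMulMap τ ((a ⊗ₜ p) ⊗ₜ (a' ⊗ₜ q)) = (a ⊗ₜ 1) * τ (p ⊗ₜ a') * (1 ⊗ₜ q) := by
  simp only [twMulMap, LinearMap.comp_apply, LinearEquiv.coe_coe, assoc_symm_tmul, map_tmul,
    assoc_tmul, LinearMap.id_apply]
  induction τ (p ⊗ₜ a') with
  | zero => simp
  | tmul c r => simp
  | add x y hx hy => simp only [tmul_add, add_tmul, map_add, hx, hy, mul_add, add_mul]

/-- Left multiplication by `1 ⊗ p` in `A ⊗^τ B`. -/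
def twMulLeft (p : B) : A ⊗[k] B →ₗ[k] A ⊗[k] B :=
  TensorProduct.map LinearMap.id (LinearMap.mul' k B) ∘ₗ (TensorProduct.assoc k A B B).toLinearMap
    ∘ₗ TensorProduct.map τ LinearMap.id ∘ₗ (TensorProduct.assoc k B A B).symm.toLinearMap
    ∘ₗ mk k B (A ⊗[k] B) p

theorem twMulLeft_tmul (p : B) (a : A) (q : B) :
    twMulLeft τ p (a ⊗ₜ q) = τ (p ⊗ₜ a) * (1 ⊗ₜ q) := by
  simp only [twMulLeft, LinearMap.comp_apply, LinearEquiv.coe_coe, mk_apply, assoc_symm_tmul,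
    map_tmul, LinearMap.id_apply, map_id_mul'_assoc_tmul]

/-- Right multiplication by `b ⊗ 1` in `A ⊗^τ B`. -/
def twMulRight (b : A) : A ⊗[k] B →ₗ[k] A ⊗[k] B :=
  TensorProduct.map (LinearMap.mul' k A) LinearMap.id
    ∘ₗ (TensorProduct.assoc k A A B).symm.toLinearMap ∘ₗ TensorProduct.map LinearMap.id τ
    ∘ₗ (TensorProduct.assoc k A B A).toLinearMap ∘ₗ (mk k (A ⊗[k] B) A).flip b

theorem twMulRight_tmul (b c : A) (r : B) :
    twMulRight τ b (c ⊗ₜ r) = (c ⊗ₜ 1) * τ (r ⊗ₜ b) := by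
  simp only [twMulRight, LinearMap.comp_apply, LinearEquiv.coe_coe, LinearMap.flip_apply,
    mk_apply, assoc_tmul, map_tmul, LinearMap.id_apply, map_mul'_id_assoc_symm_tmul]

theorem isQuasitriangular_of_tmul
    (h₁ : ∀ p q a, τ ((p * q) ⊗ₜ a) = twMulLeft τ p (τ (q ⊗ₜ a)))
    (h₂ : ∀ p a b, τ (p ⊗ₜ (a * b)) = twMulRight τ b (τ (p ⊗ₜ a))) :
    IsQuasitriangular τ := by
  constructor
  · refine TensorProduct.ext_threefold fun p q a => ?_
    simp only [LinearMap.comp_apply, LinearEquiv.coe_coe, assoc_tmul, map_tmul, LinearMap.id_apply,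
      LinearMap.mul'_apply]
    exact (h₁ p q a).symm
  · refine TensorProduct.ext_threefold' fun p a b => ?_
    simp only [LinearMap.comp_apply, LinearEquiv.coe_coe, assoc_symm_tmul, map_tmul,
      LinearMap.id_apply, LinearMap.mul'_apply]
    exact (h₂ p a b).symm

end TwistingMap

namespace OreExtension

variable (σ : A →ₐ[k] A) (δ : A →ₗ[k] A)

/-- Left multiplication by `z` in `A[z; σ, δ]`, with `a zⁿ` written as `a ⊗ Xⁿ`. -/
def mulZ : Module.End k (A ⊗[k] k[X]) :=
  TensorProduct.map σ.toLinearMap (LinearMap.mulLeft k X) + TensorProduct.map δ LinearMap.id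

theorem mulZ_tmul (a : A) (q : k[X]) : mulZ σ δ (a ⊗ₜ q) = σ a ⊗ₜ (X * q) + δ a ⊗ₜ q := by
  simp [mulZ]

def twist : k[X] ⊗[k] A →ₗ[k] A ⊗[k] k[X] :=
  lift <| (LinearMap.llcomp k A _ _).flip ((mk k A k[X]).flip 1) ∘ₗ (aeval (mulZ σ δ)).toLinearMap

theorem twist_tmul (p : k[X]) (a : A) : twist σ δ (p ⊗ₜ a) = aeval (mulZ σ δ) p (a ⊗ₜ 1) := by
  simp [twist]

theorem twist_X_tmul (a : A) : twist σ δ (X ⊗ₜ a) = σ a ⊗ₜ X + δ a ⊗ₜ 1 := by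
  simp [twist_tmul, mulZ_tmul]

theorem twist_one_tmul (a : A) : twist σ δ (1 ⊗ₜ a) = a ⊗ₜ 1 := by
  simp [twist_tmul]

theorem commute_mulZ_mulRight (r : k[X]) :
    Commute (mulZ σ δ) (LinearMap.mulRight k ((1 : A) ⊗ₜ r)) := by
  refine TensorProduct.ext' fun a q => ?_
  simp [mulZ_tmul, mul_assoc, add_mul]

theorem aeval_mulZ_mul_one_tmul (p : k[X]) (x : A ⊗[k] k[X]) (r : k[X]) :
    aeval (mulZ σ δ) p (x * (1 ⊗ₜ r)) = aeval (mulZ σ δ) p x * (1 ⊗ₜ r) :=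
  LinearMap.congr_fun (commute_aeval_left (commute_mulZ_mulRight σ δ r) p).eq x

theorem twMulLeft_twist (p : k[X]) : twMulLeft (twist σ δ) p = aeval (mulZ σ δ) p := by
  refine TensorProduct.ext' fun a q => ?_
  rw [twMulLeft_tmul, twist_tmul, ← aeval_mulZ_mul_one_tmul, Algebra.TensorProduct.tmul_mul_tmul,
    mul_one, one_mul]

theorem twist_mul_tmul (p q : k[X]) (a : A) :
    twist σ δ ((p * q) ⊗ₜ a) = twMulLeft (twist σ δ) p (twist σ δ (q ⊗ₜ a)) := by
  rw [twMulLeft_twist, twist_tmul, twist_tmul, map_mul, Module.End.mul_apply]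

variable {σ δ} (hδ : ∀ a b : A, δ (a * b) = σ a * δ b + δ a * b)
include hδ

theorem map_one_eq_zero : δ 1 = 0 := by
  simpa using hδ 1 1

theorem mulZ_tmul_one_mul (c : A) (x : A ⊗[k] k[X]) :
    mulZ σ δ ((c ⊗ₜ 1) * x) = (σ c ⊗ₜ 1) * mulZ σ δ x + (δ c ⊗ₜ 1) * x := by
  induction x with
  | zero => simp
  | tmul a q =>
    simp only [Algebra.TensorProduct.tmul_mul_tmul, mulZ_tmul, map_mul, hδ, add_tmul, one_mul,
      mul_add]
    abel
  | add x y hx hy => simp only [mul_add, map_add, hx, hy]; abel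

theorem commute_mulZ_twMulRight (b : A) : Commute (mulZ σ δ) (twMulRight (twist σ δ) b) := by
  refine TensorProduct.ext' fun c r => ?_
  have twist_X_mul : twist σ δ ((X * r) ⊗ₜ b) = mulZ σ δ (twist σ δ (r ⊗ₜ b)) := by
    rw [twist_tmul, twist_tmul, map_mul, aeval_X, Module.End.mul_apply]
  simp only [Module.End.mul_apply, twMulRight_tmul, mulZ_tmul_one_mul hδ, mulZ_tmul, map_add,
    twist_X_mul]

theorem aeval_mulZ_one_tmul (p q : k[X]) : aeval (mulZ σ δ) p (1 ⊗ₜ q) = (1 : A) ⊗ₜ (p * q) := by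
  induction p using Polynomial.induction_on generalizing q with
  | C c => simp [C_mul', tmul_smul]
  | add p p' hp hp' => simp [hp, hp', add_mul, tmul_add]
  | monomial n c ih =>
    rw [pow_succ, ← mul_assoc, map_mul, aeval_X, Module.End.mul_apply, mulZ_tmul, map_one,
      map_one_eq_zero hδ, zero_tmul, add_zero, ih, mul_assoc _ X q]

theorem isNormal_twist : IsNormal (twist σ δ) :=
  ⟨fun p => by rw [twist_tmul, aeval_mulZ_one_tmul hδ, mul_one], twist_one_tmul σ δ⟩

theorem isQuasitriangular_twist : IsQuasitriangular (twist σ δ) := by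
  refine isQuasitriangular_of_tmul _ (twist_mul_tmul σ δ) fun p a b => ?_
  have hb : twMulRight (twist σ δ) b (a ⊗ₜ 1) = (a * b) ⊗ₜ 1 := by
    rw [twMulRight_tmul, twist_one_tmul, Algebra.TensorProduct.tmul_mul_tmul, mul_one]
  rw [twist_tmul, twist_tmul, ← hb, ← Module.End.mul_apply, ← Module.End.mul_apply,
    (commute_aeval_left (commute_mulZ_twMulRight hδ b) p).eq]

end OreExtension

/-- **Ore extensions as twisted tensor products.** For an algebra
automorphism `σ` of `A` and a `σ`-derivation `δ`, there is a twisting map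
`τ : k[z] ⊗ A → A ⊗ k[z]` with `τ(z ⊗ a) = σ(a) ⊗ z + δ(a) ⊗ 1`, and `A ⊗^τ k[z]`
is the Ore extension `A[z; σ, δ]`: `A` embeds multiplicatively via `a ↦ a ⊗ 1`,
the element `z = 1 ⊗ z` satisfies `z · a = σ(a) z + δ(a)`, and `{zⁿ}` is a basis of
`A ⊗^τ k[z]` as a free left `A`-module (`a · zⁿ = a ⊗ zⁿ`). -/
theorem oreExtension_twistedTensorProduct
    (σ : A ≃ₐ[k] A) (δ : A →ₗ[k] A)
    (hδ : ∀ a b : A, δ (a * b) = σ a * δ b + δ a * b) :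
    ∃ τ : Polynomial k ⊗[k] A →ₗ[k] A ⊗[k] Polynomial k,
      IsNormal τ ∧ IsQuasitriangular τ ∧
      (∀ a : A, τ (Polynomial.X ⊗ₜ a)
          = σ a ⊗ₜ Polynomial.X + δ a ⊗ₜ (1 : Polynomial k)) ∧
      (∀ a a' : A,
        twMulMap τ (((a ⊗ₜ (1 : Polynomial k)) : A ⊗[k] Polynomial k)
            ⊗ₜ ((a' ⊗ₜ (1 : Polynomial k)) : A ⊗[k] Polynomial k))
          = (a * a') ⊗ₜ (1 : Polynomial k)) ∧
      (∀ a : A,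
        twMulMap τ ((((1 : A) ⊗ₜ Polynomial.X) : A ⊗[k] Polynomial k)
            ⊗ₜ ((a ⊗ₜ (1 : Polynomial k)) : A ⊗[k] Polynomial k))
          = σ a ⊗ₜ Polynomial.X + δ a ⊗ₜ (1 : Polynomial k)) ∧
      (∀ (a : A) (n : ℕ),
        twMulMap τ (((a ⊗ₜ (1 : Polynomial k)) : A ⊗[k] Polynomial k)
            ⊗ₜ (((1 : A) ⊗ₜ (Polynomial.X ^ n)) : A ⊗[k] Polynomial k))
          = a ⊗ₜ (Polynomial.X ^ n)) := by
  refine ⟨OreExtension.twist σ.toAlgHom δ, OreExtension.isNormal_twist hδ,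
    OreExtension.isQuasitriangular_twist hδ, OreExtension.twist_X_tmul _ δ, fun a a' => ?_,
    fun a => ?_, fun a n => ?_⟩ <;>
  simp only [twMulMap_tmul_s14, OreExtension.twist_one_tmul, OreExtension.twist_X_tmul] <;>
    simp [← Algebra.TensorProduct.one_def]

end
end
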